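/- arXiv:1711.08872 — 3 statements merged into one kernel-verified Lean document; each statement's English description precedes it below -/
import Mathlib

section
/- Let y : ℝ → ℝ be a smooth function whose graph (x, y(x)) satisfies ⟨diag(0,1)·(x,y(x)), N⟩ = k^{1/3}, where N = (1+y'²)^{-1/2}(-y',1) and k = y''/(1+y'²)^{3/2}. Then y satisfies y'' = y³. -/
/-- The real cube root. -/
noncomputable def realCbrt (x : ℝ) : ℝ := Real.sign x * |x| ^ ((1 : ℝ) / 3)

lemma realCbrt_cube (x : ℝ) : (realCbrt x) ^ 3 = x := by
  unfold realCbrt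
  rcases lt_trichotomy x 0 with h | h | h
  · rw [Real.sign_of_neg h, abs_of_neg h]
    rw [mul_pow, ← Real.rpow_natCast ((-x) ^ ((1:ℝ)/3)) 3,
      ← Real.rpow_mul (by linarith)]
    norm_num
  · simp [h, Real.sign_zero]
  · rw [Real.sign_of_pos h, abs_of_pos h]
    rw [mul_pow, ← Real.rpow_natCast (x ^ ((1:ℝ)/3)) 3,
      ← Real.rpow_mul (by linarith)]
    norm_num

/-- Expansion in a single direction: a graph solution `(x, y(x))` of
`⟨diag(0,1)·(x,y), N⟩ = k^{1/3}` satisfies `y'' = y³`. -/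
theorem expansion_single_direction (y : ℝ → ℝ) (hy : ContDiff ℝ (⊤ : ℕ∞) y)
    (heq : ∀ x : ℝ,
      y x * (1 + (deriv y x) ^ 2) ^ (-(1 : ℝ) / 2) =
        realCbrt (deriv (deriv y) x / (1 + (deriv y x) ^ 2) ^ ((3 : ℝ) / 2))) :
    ∀ x : ℝ, deriv (deriv y) x = (y x) ^ 3 := by
  intro x
  have hA : (0:ℝ) < 1 + (deriv y x) ^ 2 := by positivity
  have h := congrArg (· ^ 3) (heq x)
  simp only [realCbrt_cube] at h
  have hcube : (y x * (1 + (deriv y x) ^ 2) ^ (-(1 : ℝ) / 2)) ^ 3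
      = (y x) ^ 3 * (1 + (deriv y x) ^ 2) ^ (-(3 : ℝ) / 2) := by
    rw [mul_pow, ← Real.rpow_natCast ((1 + (deriv y x) ^ 2) ^ (-(1:ℝ)/2)) 3,
      ← Real.rpow_mul hA.le]
    norm_num
  rw [hcube] at h
  have hne : (1 + (deriv y x) ^ 2) ^ ((3:ℝ)/2) ≠ 0 := by positivity
  field_simp at h
  rw [← h, mul_assoc, ← Real.rpow_add hA]
  norm_num
end

section
/- Let B be a 2×2 real matrix and let A : [0,T) → GL(2,ℝ) satisfy the ODE system (det A)^{2/3} A⁻¹ A' = B with A(0) = I. Then det A(t) = (1 + (2/3)(tr B)·t)^{3/2}, and A(t) = exp(t·B) if tr B = 0, while A(t) = exp( (3/(2 tr B)) · ln(1 + (2/3)(tr B)·t) · B ) if tr B ≠ 0. -/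
open Matrix Set

/-!
Jacobi's formula turns the equation into the scalar ODE `(det A)' = tr B · (det A)^{1/3}`.
Since `det A` is continuous, never zero and equal to `1` at `0`, it stays positive, so
`(det A)^{2/3}` has constant derivative `(2/3) tr B` and equals `1 + (2/3) tr B · t`.
The matrix equation then reads `A' = c'(t) • A B` with `c' = (1 + (2/3) tr B · t)⁻¹`, and
`A(t) exp(-c(t) B)` has zero derivative because `B` commutes with `exp(sB)`; hence
`A(t) = exp(c(t) B)` for the primitive `c` of `c'` with `c(0) = 0`.
-/

theorem constant_of_hasDerivAt_zero_Ico {E : Type*} [NormedAddCommGroup E] [NormedSpace ℝ E]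
    {f : ℝ → E} {a b : ℝ} (hf : ∀ t ∈ Ico a b, HasDerivAt f 0 t) {t : ℝ} (ht : t ∈ Ico a b) :
    f t = f a := by
  have hsub : Icc a t ⊆ Ico a b := Icc_subset_Ico_right ht.2
  refine constant_of_has_deriv_right_zero
    (fun s hs => (hf s (hsub hs)).continuousAt.continuousWithinAt)
    (fun s hs => (hf s (hsub (Ico_subset_Icc_self hs))).hasDerivWithinAt) t ⟨ht.1, le_rfl⟩

section LinftyOp

attribute [local instance] Matrix.linftyOpNormedAddCommGroup Matrix.linftyOpNormedSpace

theorem Matrix.hasDerivAt_of_hasDerivAt_apply {m n 𝕜 : Type*} [Fintype m] [Fintype n]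
    [DecidableEq m] [DecidableEq n] [NontriviallyNormedField 𝕜]
    {A : 𝕜 → Matrix m n 𝕜} {A' : Matrix m n 𝕜} {t : 𝕜}
    (hA : ∀ i j, HasDerivAt (fun s => A s i j) (A' i j) t) : HasDerivAt A A' t := by
  have hsum : ∀ M : Matrix m n 𝕜, M = ∑ i, ∑ j, M i j • single i j (1 : 𝕜) := fun M => by
    simp_rw [smul_single, smul_eq_mul, mul_one]
    exact matrix_eq_sum_single M
  have H : HasDerivAt (fun s => ∑ i, ∑ j, A s i j • single i j (1 : 𝕜))
      (∑ i, ∑ j, A' i j • single i j (1 : 𝕜)) t :=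
    HasDerivAt.fun_sum fun i _ => HasDerivAt.fun_sum fun j _ => (hA i j).smul_const _
  rwa [← hsum, ← funext fun s => hsum (A s)] at H

end LinftyOp

theorem Matrix.hasDerivAt_det_fin_two {𝕜 : Type*} [NontriviallyNormedField 𝕜]
    {A : 𝕜 → Matrix (Fin 2) (Fin 2) 𝕜} {A' : Matrix (Fin 2) (Fin 2) 𝕜} {t : 𝕜}
    (hA : ∀ i j, HasDerivAt (fun s => A s i j) (A' i j) t) :
    HasDerivAt (fun s => (A s).det) (trace (adjugate (A t) * A')) t := by
  simp only [det_fin_two]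
  refine (((hA 0 0).fun_mul (hA 1 1)).fun_sub ((hA 0 1).fun_mul (hA 1 0))).congr_deriv ?_
  simp [adjugate_fin_two, trace_fin_two, vecMul, dotProduct, Fin.sum_univ_two]
  ring

theorem Matrix.trace_adjugate_mul_smul_mul {n : Type*} [Fintype n] [DecidableEq n]
    {R : Type*} [CommRing R] (M B : Matrix n n R) (c : R) :
    trace (adjugate M * (c • (M * B))) = c * M.det * trace B := by
  rw [mul_smul_comm, ← Matrix.mul_assoc, adjugate_mul, smul_mul_assoc, Matrix.one_mul,
    trace_smul, trace_smul, smul_eq_mul, smul_eq_mul, mul_assoc]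

theorem rpow_eq_one_add_mul_of_hasDerivAt {f : ℝ → ℝ} {k p T : ℝ} (hf0 : f 0 = 1)
    (hpos : ∀ t ∈ Ico 0 T, 0 < f t)
    (hf : ∀ t ∈ Ico 0 T, HasDerivAt f (k * f t ^ (1 - p)) t) {t : ℝ} (ht : t ∈ Ico 0 T) :
    f t ^ p = 1 + p * k * t := by
  have hzero : ∀ s ∈ Ico 0 T, HasDerivAt (fun s => f s ^ p - p * k * s) 0 s := by
    intro s hs
    have hfp := (hf s hs).rpow_const (p := p) (Or.inl (hpos s hs).ne')
    have hlin := (hasDerivAt_id s).const_mul (p * k)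
    refine (hfp.sub hlin).congr_deriv ?_
    have hexp : f s ^ (1 - p) * f s ^ (p - 1) = 1 := by
      rw [← Real.rpow_add (hpos s hs)]
      simp
    linear_combination (p * k) * hexp
  have := constant_of_hasDerivAt_zero_Ico hzero ht
  simp only [hf0, Real.one_rpow, mul_zero, sub_zero] at this
  linarith

section NormedAlgebra

variable {𝔸 : Type*} [NormedRing 𝔸] [NormedAlgebra ℝ 𝔸] [CompleteSpace 𝔸]

theorem eq_mul_exp_smul_of_hasDerivAt {A : ℝ → 𝔸} {B : 𝔸} {c φ : ℝ → ℝ} {T : ℝ}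
    (hA : ∀ t ∈ Ico 0 T, HasDerivAt A (φ t • (A t * B)) t)
    (hc : ∀ t ∈ Ico 0 T, HasDerivAt c (φ t) t) {t : ℝ} (ht : t ∈ Ico 0 T) :
    A t = A 0 * NormedSpace.exp ((c t - c 0) • B) := by
  have hconst : ∀ s ∈ Ico 0 T,
      HasDerivAt (fun s => A s * NormedSpace.exp ((c 0 - c s) • B)) 0 s := by
    intro s hs
    have hE :=
      (hasDerivAt_exp_smul_const (𝕂 := ℝ) B (c 0 - c s)).scomp s ((hc s hs).const_sub (c 0))
    refine ((hA s hs).mul hE).congr_deriv ?_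
    have hBE : B * NormedSpace.exp ((c 0 - c s) • B) = NormedSpace.exp ((c 0 - c s) • B) * B :=
      ((Commute.refl B).smul_right _).exp_right.eq
    rw [Function.comp_apply, smul_mul_assoc, mul_smul_comm, mul_assoc, hBE, ← add_smul,
      add_neg_cancel, zero_smul]
  let : NormedAlgebra ℚ 𝔸 := NormedAlgebra.restrictScalars ℚ ℝ 𝔸
  have hsplit : ((c 0 - c t) • B) + ((c t - c 0) • B) = 0 := by
    rw [← add_smul, sub_add_sub_cancel, sub_self, zero_smul]
  calc A t = A t * NormedSpace.exp (((c 0 - c t) • B) + ((c t - c 0) • B)) := by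
        rw [hsplit, NormedSpace.exp_zero, mul_one]
    _ = A t * NormedSpace.exp ((c 0 - c t) • B) * NormedSpace.exp ((c t - c 0) • B) := by
        rw [NormedSpace.exp_add_of_commute (((Commute.refl B).smul_left _).smul_right _),
          mul_assoc]
    _ = A 0 * NormedSpace.exp ((c t - c 0) • B) := by
        rw [constant_of_hasDerivAt_zero_Ico hconst ht, sub_self, zero_smul,
          NormedSpace.exp_zero, mul_one]

end NormedAlgebra

theorem hasDerivAt_inv_mul_log_one_add_mul {k x : ℝ} (hk : k ≠ 0) (hx : 1 + k * x ≠ 0) :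
    HasDerivAt (fun s => k⁻¹ * Real.log (1 + k * s)) (1 + k * x)⁻¹ x := by
  have hlin : HasDerivAt (fun s => 1 + k * s) k x := by
    simpa using ((hasDerivAt_id x).const_mul k).const_add 1
  refine ((hlin.log hx).const_mul k⁻¹).congr_deriv ?_
  field_simp

theorem Matrix.eq_inv_smul_mul_of_smul_nonsing_inv_mul_eq {n K : Type*} [Fintype n]
    [DecidableEq n] [Field K] {M N B : Matrix n n K} {c : K} (hM : IsUnit M.det) (hc : c ≠ 0)
    (h : c • (M⁻¹ * N) = B) : N = c⁻¹ • (M * B) := by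
  rw [← h, mul_smul_comm, ← Matrix.mul_assoc, mul_nonsing_inv _ hM, Matrix.one_mul,
    inv_smul_smul₀ hc]

section SelfSimilar

variable {B : Matrix (Fin 2) (Fin 2) ℝ} {T : ℝ} {A A' : ℝ → Matrix (Fin 2) (Fin 2) ℝ}

theorem det_pos_of_isUnit_of_hasDerivAt (hA0 : A 0 = 1)
    (hunit : ∀ t ∈ Ico 0 T, IsUnit (A t).det)
    (hderiv : ∀ t ∈ Ico 0 T, ∀ i j, HasDerivAt (fun s => A s i j) (A' t i j) t)
    {t : ℝ} (ht : t ∈ Ico 0 T) : 0 < (A t).det :=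
  isPreconnected_Ico.lt_of_ne
    (fun s hs => (hasDerivAt_det_fin_two (hderiv s hs)).continuousAt.continuousWithinAt)
    (fun s hs => (hunit s hs).ne_zero) ⟨0, ⟨le_rfl, ht.1.trans_lt ht.2⟩, by simp [hA0]⟩ ht

variable (hA0 : A 0 = 1) (hunit : ∀ t ∈ Ico 0 T, IsUnit (A t).det)
  (hderiv : ∀ t ∈ Ico 0 T, ∀ i j, HasDerivAt (fun s => A s i j) (A' t i j) t)
  (hode : ∀ t ∈ Ico 0 T, ((A t).det ^ (2 / 3 : ℝ)) • ((A t)⁻¹ * A' t) = B)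
include hA0 hunit hderiv hode

theorem eq_inv_rpow_det_smul_mul {t : ℝ} (ht : t ∈ Ico 0 T) :
    A' t = ((A t).det ^ (2 / 3 : ℝ))⁻¹ • (A t * B) :=
  eq_inv_smul_mul_of_smul_nonsing_inv_mul_eq (hunit t ht)
    (Real.rpow_pos_of_pos (det_pos_of_isUnit_of_hasDerivAt hA0 hunit hderiv ht) _).ne' (hode t ht)

theorem rpow_det_eq_one_add_mul {t : ℝ} (ht : t ∈ Ico 0 T) :
    (A t).det ^ (2 / 3 : ℝ) = 1 + 2 / 3 * B.trace * t := by
  have hpos := fun s (hs : s ∈ Ico 0 T) => det_pos_of_isUnit_of_hasDerivAt hA0 hunit hderiv hs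
  have hdet : ∀ s ∈ Ico 0 T,
      HasDerivAt (fun s => (A s).det) (B.trace * (A s).det ^ (1 - 2 / 3 : ℝ)) s := by
    intro s hs
    refine (hasDerivAt_det_fin_two (hderiv s hs)).congr_deriv ?_
    rw [eq_inv_rpow_det_smul_mul hA0 hunit hderiv hode hs, trace_adjugate_mul_smul_mul,
      Real.rpow_sub (hpos s hs), Real.rpow_one]
    ring
  exact rpow_eq_one_add_mul_of_hasDerivAt (by simp [hA0]) hpos hdet ht

theorem eq_exp_smul_of_hasDerivAt {c : ℝ → ℝ} (hc0 : c 0 = 0)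
    (hc : ∀ t ∈ Ico 0 T, HasDerivAt c (1 + 2 / 3 * B.trace * t)⁻¹ t)
    {t : ℝ} (ht : t ∈ Ico 0 T) : A t = NormedSpace.exp (c t • B) := by
  let : NormedRing (Matrix (Fin 2) (Fin 2) ℝ) := Matrix.linftyOpNormedRing
  let : NormedAlgebra ℝ (Matrix (Fin 2) (Fin 2) ℝ) := Matrix.linftyOpNormedAlgebra
  have hA : ∀ s ∈ Ico 0 T, HasDerivAt A ((1 + 2 / 3 * B.trace * s)⁻¹ • (A s * B)) s := by
    intro s hs
    rw [← rpow_det_eq_one_add_mul hA0 hunit hderiv hode hs,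
      ← eq_inv_rpow_det_smul_mul hA0 hunit hderiv hode hs]
    exact hasDerivAt_of_hasDerivAt_apply (hderiv s hs)
  have := eq_mul_exp_smul_of_hasDerivAt hA hc ht
  rw [hA0, hc0, sub_zero, one_mul] at this
  exact this

end SelfSimilar

theorem self_similar_action_form_general (B : Matrix (Fin 2) (Fin 2) ℝ) (T : ℝ)
    (A A' : ℝ → Matrix (Fin 2) (Fin 2) ℝ)
    (hA0 : A 0 = 1)
    (hunit : ∀ t ∈ Set.Ico (0 : ℝ) T, IsUnit (A t).det)
    (hderiv : ∀ t ∈ Set.Ico (0 : ℝ) T, ∀ i j : Fin 2,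
      HasDerivAt (fun s => A s i j) (A' t i j) t)
    (hode : ∀ t ∈ Set.Ico (0 : ℝ) T,
      ((A t).det ^ ((2 : ℝ) / 3)) • ((A t)⁻¹ * A' t) = B) :
    ∀ t ∈ Set.Ico (0 : ℝ) T,
      (A t).det = (1 + (2 / 3) * B.trace * t) ^ ((3 : ℝ) / 2) ∧
      (B.trace = 0 → A t = NormedSpace.exp (t • B)) ∧
      (B.trace ≠ 0 → A t =
        NormedSpace.exp
          (((3 / (2 * B.trace)) * Real.log (1 + (2 / 3) * B.trace * t)) • B)) := by
  have hpos := fun t (ht : t ∈ Ico 0 T) => det_pos_of_isUnit_of_hasDerivAt hA0 hunit hderiv ht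
  have hgrowth := fun t (ht : t ∈ Ico 0 T) => rpow_det_eq_one_add_mul hA0 hunit hderiv hode ht
  intro t ht
  refine ⟨?_, fun htr => ?_, fun htr => ?_⟩
  · rw [← hgrowth t ht, ← Real.rpow_mul (hpos t ht).le]
    norm_num
  · refine eq_exp_smul_of_hasDerivAt hA0 hunit hderiv hode (c := id) rfl (fun s _ => ?_) ht
    simpa [htr] using hasDerivAt_id s
  · have hk : 2 / 3 * B.trace ≠ 0 := by positivity
    rw [show 3 / (2 * B.trace) = (2 / 3 * B.trace)⁻¹ by field_simp]
    refine eq_exp_smul_of_hasDerivAt hA0 hunit hderiv hode (by simp)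
      (fun s hs => hasDerivAt_inv_mul_log_one_add_mul hk ?_) ht
    rw [← hgrowth s hs]
    exact (Real.rpow_pos_of_pos (hpos s hs) _).ne'

/-- Lemma 2.1 (form of the self-similar actions): if `A : [0,T) → GL(2,ℝ)` solves
`(det A)^{2/3} A⁻¹ A' = B` with `A(0) = I`, then
`det A(t) = (1 + (2/3) tr B · t)^{3/2}` and `A(t) = exp(tB)` when `tr B = 0`, while
`A(t) = exp((3/(2 tr B)) ln(1 + (2/3) tr B · t) · B)` when `tr B ≠ 0`. -/
theorem self_similar_action_form (B : Matrix (Fin 2) (Fin 2) ℝ) (T : ℝ) (hT : 0 < T)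
    (A A' : ℝ → Matrix (Fin 2) (Fin 2) ℝ)
    (hA0 : A 0 = 1)
    (hunit : ∀ t ∈ Set.Ico (0 : ℝ) T, IsUnit (A t).det)
    (hderiv : ∀ t ∈ Set.Ico (0 : ℝ) T, ∀ i j : Fin 2,
      HasDerivAt (fun s => A s i j) (A' t i j) t)
    (hode : ∀ t ∈ Set.Ico (0 : ℝ) T,
      ((A t).det ^ ((2 : ℝ) / 3)) • ((A t)⁻¹ * A' t) = B) :
    ∀ t ∈ Set.Ico (0 : ℝ) T,
      (A t).det = (1 + (2 / 3) * B.trace * t) ^ ((3 : ℝ) / 2) ∧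
      (B.trace = 0 → A t = NormedSpace.exp (t • B)) ∧
      (B.trace ≠ 0 → A t =
        NormedSpace.exp
          (((3 / (2 * B.trace)) * Real.log (1 + (2 / 3) * B.trace * t)) • B)) :=
  self_similar_action_form_general B T A A' hA0 hunit hderiv hode
end

section
/- Let (u, v) solve u' = v, v' = -(u+v)³, parametrized so that u is a function of v on a trajectory with v > 0 and u + v > 0, satisfying du/dv = -v/(u+v)³. If at some v₀ > 1 one has u(v₀) > -v₀ + 2v₀^{1/3} and u(v) → -∞ as v → +∞, then a contradiction arises; hence any such trajectory with u(v) → -∞ as v → +∞ satisfies u(v) ≤ -v + 2v^{1/3} for all v > 1. -/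
open Filter Set

/-!
Suppose `u(v₀) > -v₀ + 2r` with `r = v₀^{1/3} > 1`, and put `a = -v₀ + r`, so that `a + v₀ = r`.
While `u ≥ a` we have `du/dv ≥ -v/(a+v)³`, so `u + tailPrimitive a` is nondecreasing, and
`tailPrimitive a v₀ = -∫_{v₀}^∞ v/(a+v)³ dv = -(r/2 + 1/(2r)) ≥ -r`. Let `T` be the first `v ≥ v₀`
with `u(v) ≤ c := u(v₀) + tailPrimitive a v₀`; it exists since `u → -∞`, and `c ≥ a` by the
estimate above. As `tailPrimitive a < 0`, we get `c ≤ u(T) + tailPrimitive a T < u(T) ≤ c`.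
-/

/-- The primitive of `v ↦ v / (a + v)³` that vanishes at `+∞`. -/
noncomputable def tailPrimitive (a v : ℝ) : ℝ := -(a + 2 * v) / (2 * (a + v) ^ 2)

theorem hasDerivAt_tailPrimitive {a v : ℝ} (h : a + v ≠ 0) :
    HasDerivAt (tailPrimitive a) (v / (a + v) ^ 3) v := by
  have hnum : HasDerivAt (fun x : ℝ => -(a + 2 * x)) (-2) v :=
    ((((hasDerivAt_id' v).const_mul 2).const_add a).neg).congr_deriv (by ring)
  have hden : HasDerivAt (fun x : ℝ => 2 * (a + x) ^ 2) (4 * (a + v)) v :=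
    ((((hasDerivAt_id' v).const_add a).pow 2).const_mul 2).congr_deriv (by ring)
  refine (hnum.div hden (by positivity)).congr_deriv ?_
  field_simp
  ring

theorem tailPrimitive_neg {a v : ℝ} (hv : 0 < v) (hav : 0 < a + v) : tailPrimitive a v < 0 := by
  unfold tailPrimitive
  exact div_neg_of_neg_of_pos (by linarith) (by positivity)

theorem neg_le_tailPrimitive_sub_cube_cube {r : ℝ} (hr : 1 ≤ r) :
    -r ≤ tailPrimitive (r - r ^ 3) (r ^ 3) := by
  have hr0 : 0 < r := by linarith
  rw [tailPrimitive, show r - r ^ 3 + r ^ 3 = r by ring, le_div_iff₀ (by positivity)]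
  nlinarith [pow_le_pow_left₀ zero_le_one hr 2]

theorem exists_first_le_of_tendsto_atBot {α β : Type*} [ConditionallyCompleteLinearOrder α]
    [TopologicalSpace α] [OrderTopology α] [LinearOrder β] [TopologicalSpace β]
    [ClosedIicTopology β] {u : α → β} {x₀ : α} {c : β} (hu : ContinuousOn u (Ici x₀))
    (hlim : Tendsto u atTop atBot) :
    ∃ T, x₀ ≤ T ∧ u T ≤ c ∧ ∀ x ∈ Ico x₀ T, c < u x := by
  have : Nonempty α := ⟨x₀⟩
  set S := Ici x₀ ∩ u ⁻¹' Iic c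
  have hS : S.Nonempty :=
    ((eventually_ge_atTop x₀).and (hlim.eventually (eventually_le_atBot c))).exists
  have hbdd : BddBelow S := ⟨x₀, fun _ h => h.1⟩
  have hT : sInf S ∈ S :=
    (hu.preimage_isClosed_of_isClosed isClosed_Ici isClosed_Iic).csInf_mem hS hbdd
  exact ⟨sInf S, hT.1, hT.2, fun x hx => lt_of_not_ge fun hxc =>
    (csInf_le hbdd ⟨hx.1, hxc⟩).not_gt hx.2⟩

theorem monotoneOn_add_tailPrimitive {u : ℝ → ℝ} {a x y : ℝ} (hx : 0 < x) (hax : 0 < a + x)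
    (hderiv : ∀ v ∈ Icc x y, HasDerivAt u (-v / (u v + v) ^ 3) v)
    (hua : ∀ v ∈ Ioo x y, a ≤ u v) :
    MonotoneOn (fun v => u v + tailPrimitive a v) (Icc x y) := by
  have hsum : ∀ v ∈ Icc x y, HasDerivAt (fun v => u v + tailPrimitive a v)
      (-v / (u v + v) ^ 3 + v / (a + v) ^ 3) v := fun v hv =>
    (hderiv v hv).add (hasDerivAt_tailPrimitive (by linarith [hv.1]))
  refine monotoneOn_of_hasDerivWithinAt_nonneg (convex_Icc x y)
    (fun v hv => (hsum v hv).continuousAt.continuousWithinAt)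
    (fun v hv => (hsum v (interior_subset hv)).hasDerivWithinAt) fun v hv => ?_
  rw [interior_Icc] at hv
  have hav : 0 < a + v := by linarith [hv.1]
  have hcube : (a + v) ^ 3 ≤ (u v + v) ^ 3 := by gcongr; linarith [hua v hv]
  have : v / (u v + v) ^ 3 ≤ v / (a + v) ^ 3 :=
    div_le_div_of_nonneg_left (by linarith [hv.1]) (by positivity) hcube
  rw [neg_div]
  linarith

theorem trajectory_upper_bound_general (u : ℝ → ℝ)
    (hderiv : ∀ v ∈ Set.Ioi (0 : ℝ), HasDerivAt u (-v / (u v + v) ^ 3) v)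
    (hlim : Tendsto u atTop atBot) :
    ∀ v : ℝ, 1 < v → u v ≤ -v + 2 * v ^ ((1 : ℝ) / 3) := by
  intro v₀ hv₀
  by_contra! hcon
  have hderiv' : ∀ v, v₀ ≤ v → HasDerivAt u (-v / (u v + v) ^ 3) v := fun v hv =>
    hderiv v (mem_Ioi.2 (by linarith))
  set r := v₀ ^ ((1 : ℝ) / 3)
  have hr : 1 < r := Real.one_lt_rpow hv₀ (by norm_num)
  have hr3 : r ^ 3 = v₀ := by
    simpa [r] using Real.rpow_inv_natCast_pow (x := v₀) (n := 3) (by linarith) (by norm_num)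
  set a := r - r ^ 3
  have hav₀ : a + v₀ = r := by rw [← hr3]; ring
  have hF : -r ≤ tailPrimitive a v₀ := by
    convert neg_le_tailPrimitive_sub_cube_cube hr.le
    exact hr3.symm
  set c := u v₀ + tailPrimitive a v₀
  have hac : a ≤ c := by linarith
  obtain ⟨T, hv₀T, huT, habove⟩ := exists_first_le_of_tendsto_atBot (x₀ := v₀) (c := c)
    (fun v hv => (hderiv' v hv).continuousAt.continuousWithinAt) hlim
  have hmono := monotoneOn_add_tailPrimitive (a := a) (by linarith) (by linarith)
    (fun v hv => hderiv' v hv.1) fun v hv => hac.trans (habove v (Ioo_subset_Ico_self hv)).le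
  have hgrow : c ≤ u T + tailPrimitive a T :=
    hmono (left_mem_Icc.2 hv₀T) (right_mem_Icc.2 hv₀T) hv₀T
  have hFT : tailPrimitive a T < 0 := tailPrimitive_neg (by linarith) (by linarith)
  linarith

/-- Claim 5: along a trajectory of `u' = v`, `v' = -(u+v)³` parametrized by `v`
(so `du/dv = -v/(u+v)³`) with `u + v > 0` for `v > 0`, if `u(v) → -∞` as
`v → +∞`, then `u(v) ≤ -v + 2 v^{1/3}` for all `v > 1`. -/
theorem trajectory_upper_bound (u : ℝ → ℝ)
    (hderiv : ∀ v ∈ Set.Ioi (0 : ℝ), HasDerivAt u (-v / (u v + v) ^ 3) v)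
    (hpos : ∀ v ∈ Set.Ioi (0 : ℝ), 0 < u v + v)
    (hlim : Tendsto u atTop atBot) :
    ∀ v : ℝ, 1 < v → u v ≤ -v + 2 * v ^ ((1 : ℝ) / 3) :=
  trajectory_upper_bound_general u hderiv hlim
end
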